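/- arXiv:2302.11212 — 9 statements merged into one kernel-verified Lean document; each statement's English description precedes it below -/
import Mathlib

section
/- Let κ > 0, Γ_c > 0, Γ_g > 0, δ̃ > 0, ε_g ≥ 0, 0 < p < 1, 0 < q < 1 < φ_π, and g be real numbers. Set Γ_k := (1 + Γ_g)·ε_g, D_q := 1 − q + κΓ_c(φ_π − q), D_p := 1 − p + κΓ_c(φ_π − p), k := δ̃·g/(1 − p), c₂ := κ(φ_π − q)Γ_k·k / D_q, and π₂ := −κ(1 − q)Γ_k·k / D_q. Then the unique pair (c₁, π₁) satisfying the normal-times short-run system c₁ = p·c₁ + (1−p)·c₂ − (φ_π·π₁ − p·π₁ − (1−p)·π₂) and π₁ = κ(Γ_c·c₁ + Γ_g·g) satisfies c₁ = κ·[ (φ_π − 1)(1 + Γ_g)·δ̃·ε_g / D_q − (φ_π − p)·Γ_g ] · g / D_p. -/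
theorem normal_times_short_run_consumption
    (κ Γc Γg δt εg p q φ g : ℝ)
    (hκ : 0 < κ) (hΓc : 0 < Γc) (hΓg : 0 < Γg) (hδt : 0 < δt) (hεg : 0 ≤ εg)
    (hp0 : 0 < p) (hp1 : p < 1) (hq0 : 0 < q) (hq1 : q < 1) (hφ : 1 < φ)
    (Γk Dq Dp k c₂ π₂ : ℝ)
    (hΓk : Γk = (1 + Γg) * εg)
    (hDq : Dq = 1 - q + κ * Γc * (φ - q))
    (hDp : Dp = 1 - p + κ * Γc * (φ - p))
    (hk : k = δt * g / (1 - p))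
    (hc₂ : c₂ = κ * (φ - q) * Γk * k / Dq)
    (hπ₂ : π₂ = -(κ * (1 - q) * Γk * k) / Dq) :
    ∀ c₁ π₁ : ℝ,
      (c₁ = p * c₁ + (1 - p) * c₂ - (φ * π₁ - p * π₁ - (1 - p) * π₂) ∧
       π₁ = κ * (Γc * c₁ + Γg * g)) →
      c₁ = κ * ((φ - 1) * (1 + Γg) * δt * εg / Dq - (φ - p) * Γg) * g / Dp := by
  intro c₁ π₁ ⟨h1, h2⟩
  have hmq : 0 < κ * Γc * (φ - q) := by
    apply mul_pos (mul_pos hκ hΓc); linarith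
  have hmp : 0 < κ * Γc * (φ - p) := by
    apply mul_pos (mul_pos hκ hΓc); linarith
  have hDq0 : Dq ≠ 0 := by rw [hDq]; nlinarith
  have hDp0 : Dp ≠ 0 := by rw [hDp]; nlinarith
  have hp : (1 : ℝ) - p ≠ 0 := by
    intro h; linarith [h]
  have key : c₁ * Dp = (1 - p) * (c₂ + π₂) - (φ - p) * (κ * Γg * g) := by
    rw [hDp]; linear_combination h1 - (φ - p) * h2
  have key2 : (c₂ + π₂) * Dq = κ * (φ - 1) * Γk * k := by
    rw [hc₂, hπ₂]; field_simp; ring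
  have hk' : k * (1 - p) = δt * g := by
    rw [hk]; field_simp
  rw [hΓk] at key2
  have final : c₁ * Dp * Dq
      = κ * ((φ - 1) * (1 + Γg) * δt * εg - (φ - p) * Γg * Dq) * g := by
    linear_combination Dq * key + (1 - p) * key2 + κ * (φ - 1) * ((1 + Γg) * εg) * hk'
  field_simp
  linear_combination final
end

section
/- Let κ > 0, Γ_c > 0, Γ_g > 0, δ̃ > 0, ε_g ≥ 0, 0 < p < 1, 0 < q < 1 < φ_π, and g > 0 be real numbers. Set Γ_k := (1 + Γ_g)·ε_g, D_q := 1 − q + κΓ_c(φ_π − q), k := δ̃·g/(1 − p), c₂ := κ(φ_π − q)Γ_k·k / D_q, π₂ := −κ(1 − q)Γ_k·k / D_q, and define the threshold ε_g^I := ((φ_π − p)/(φ_π − 1)) · (Γ_g/(1 + Γ_g)) · (D_q/δ̃). Then ε_g^I > 0, and the unique pair (c₁, π₁) satisfying the normal-times short-run system c₁ = p·c₁ + (1−p)·c₂ − (φ_π·π₁ − p·π₁ − (1−p)·π₂) and π₁ = κ(Γ_c·c₁ + Γ_g·g) satisfies c₁ > 0 if and only if ε_g > ε_g^I. -/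
/-!
Substituting the Phillips curve into the Euler equation leaves one linear equation for `c₁` whose
coefficient `1 - p + κ Γc (φ - p)` is positive. The medium run enters only through
`c₂ + π₂ = κ (φ - 1) Γk k / Dq`, in which `q` cancels from the numerator, and `(1 - p) k = δ̃ g`.
Hence `c₁` has the sign of `κ g / Dq` times `(1 + Γg)(φ - 1) δ̃ εg - (φ - p) Γg Dq`, and this
margin is positive exactly when `εg` exceeds the threshold.
-/

namespace NormalTimes

lemma one_sub_add_mul_sub_pos {a b r : ℝ} (hb : b < 1) (hr : 1 < r) (ha : 0 ≤ a) :
    0 < 1 - b + a * (r - b) := by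
  have : 0 ≤ a * (r - b) := mul_nonneg ha (by linarith)
  linarith

lemma coeff_mul_consumption_eq {p φ κ Γc Γg g c₁ π₁ c₂ π₂ : ℝ}
    (hEuler : c₁ = p * c₁ + (1 - p) * c₂ - (φ * π₁ - p * π₁ - (1 - p) * π₂))
    (hPhillips : π₁ = κ * (Γc * c₁ + Γg * g)) :
    (1 - p + κ * Γc * (φ - p)) * c₁ = (1 - p) * (c₂ + π₂) - κ * (φ - p) * Γg * g := by
  subst hPhillips
  linear_combination hEuler

lemma medium_run_add (κ φ q Γk k Dq : ℝ) :
    κ * (φ - q) * Γk * k / Dq + -(κ * (1 - q) * Γk * k) / Dq = κ * (φ - 1) * Γk * k / Dq := by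
  ring

lemma threshold_lt_iff {φ p Γg Dq δt εg : ℝ} (hφ : 1 < φ) (hΓg : 0 < 1 + Γg) (hδt : 0 < δt) :
    (φ - p) / (φ - 1) * (Γg / (1 + Γg)) * (Dq / δt) < εg ↔
      (φ - p) * Γg * Dq < (1 + Γg) * (φ - 1) * δt * εg := by
  have hden : 0 < (φ - 1) * (1 + Γg) * δt := mul_pos (mul_pos (by linarith) hΓg) hδt
  rw [div_mul_div_comm, div_mul_div_comm, div_lt_iff₀ hden]
  constructor <;> intro h <;> linarith

end NormalTimes

open NormalTimes in
theorem normal_times_crowding_in_threshold_general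
    (κ Γc Γg δt εg p q φ g : ℝ)
    (hκ : 0 < κ) (hΓc : 0 < Γc) (hΓg : 0 < Γg) (hδt : 0 < δt)
    (hp1 : p < 1) (hq1 : q < 1) (hφ : 1 < φ)
    (hg : 0 < g)
    (Γk Dq k c₂ π₂ εgI : ℝ)
    (hΓk : Γk = (1 + Γg) * εg)
    (hDq : Dq = 1 - q + κ * Γc * (φ - q))
    (hk : k = δt * g / (1 - p))
    (hc₂ : c₂ = κ * (φ - q) * Γk * k / Dq)
    (hπ₂ : π₂ = -(κ * (1 - q) * Γk * k) / Dq)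
    (hεgI : εgI = ((φ - p) / (φ - 1)) * (Γg / (1 + Γg)) * (Dq / δt)) :
    0 < εgI ∧
    ∀ c₁ π₁ : ℝ,
      (c₁ = p * c₁ + (1 - p) * c₂ - (φ * π₁ - p * π₁ - (1 - p) * π₂) ∧
       π₁ = κ * (Γc * c₁ + Γg * g)) →
      (0 < c₁ ↔ εgI < εg) := by
  have hκΓc : 0 ≤ κ * Γc := (mul_pos hκ hΓc).le
  have hDq0 : 0 < Dq := hDq ▸ one_sub_add_mul_sub_pos hq1 hφ hκΓc
  refine ⟨?_, ?_⟩
  · rw [hεgI]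
    exact mul_pos (mul_pos (div_pos (by linarith) (by linarith)) (div_pos hΓg (by linarith)))
      (div_pos hDq0 hδt)
  rintro c₁ π₁ ⟨hEuler, hPhillips⟩
  have hsign : (1 - p + κ * Γc * (φ - p)) * c₁ =
      κ * g / Dq * ((1 + Γg) * (φ - 1) * δt * εg - (φ - p) * Γg * Dq) := by
    rw [coeff_mul_consumption_eq hEuler hPhillips, hc₂, hπ₂, medium_run_add, hΓk, hk]
    field_simp [(sub_pos.mpr hp1).ne']
  rw [← mul_pos_iff_of_pos_left (one_sub_add_mul_sub_pos hp1 hφ hκΓc), hsign,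
    mul_pos_iff_of_pos_left (div_pos (mul_pos hκ hg) hDq0), sub_pos, hεgI,
    threshold_lt_iff hφ (by linarith) hδt]

theorem normal_times_crowding_in_threshold
    (κ Γc Γg δt εg p q φ g : ℝ)
    (hκ : 0 < κ) (hΓc : 0 < Γc) (hΓg : 0 < Γg) (hδt : 0 < δt) (hεg : 0 ≤ εg)
    (hp0 : 0 < p) (hp1 : p < 1) (hq0 : 0 < q) (hq1 : q < 1) (hφ : 1 < φ)
    (hg : 0 < g)
    (Γk Dq k c₂ π₂ εgI : ℝ)
    (hΓk : Γk = (1 + Γg) * εg)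
    (hDq : Dq = 1 - q + κ * Γc * (φ - q))
    (hk : k = δt * g / (1 - p))
    (hc₂ : c₂ = κ * (φ - q) * Γk * k / Dq)
    (hπ₂ : π₂ = -(κ * (1 - q) * Γk * k) / Dq)
    (hεgI : εgI = ((φ - p) / (φ - 1)) * (Γg / (1 + Γg)) * (Dq / δt)) :
    0 < εgI ∧
    ∀ c₁ π₁ : ℝ,
      (c₁ = p * c₁ + (1 - p) * c₂ - (φ * π₁ - p * π₁ - (1 - p) * π₂) ∧
       π₁ = κ * (Γc * c₁ + Γg * g)) →
      (0 < c₁ ↔ εgI < εg) :=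
  normal_times_crowding_in_threshold_general κ Γc Γg δt εg p q φ g hκ hΓc hΓg hδt hp1 hq1 hφ hg Γk
    Dq k c₂ π₂ εgI hΓk hDq hk hc₂ hπ₂ hεgI
end

section
/- Let κ > 0, Γ_c > 0, Γ_g > 0, δ̃ > 0, ε_g ≥ 0, 0 < p < 1, 0 < q < 1 < φ_π, and g > 0 be real numbers. Set Γ_k := (1 + Γ_g)·ε_g, D_q := 1 − q + κΓ_c(φ_π − q), k := δ̃·g/(1 − p), c₂ := κ(φ_π − q)Γ_k·k / D_q, and π₂ := −κ(1 − q)Γ_k·k / D_q. Then the unique pair (c₁, π₁) satisfying the normal-times short-run system c₁ = p·c₁ + (1−p)·c₂ − (φ_π·π₁ − p·π₁ − (1−p)·π₂) and π₁ = κ(Γ_c·c₁ + Γ_g·g) satisfies π₁ > 0. -/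
/-!
Eliminating `c₁` between the Euler equation and the Phillips curve gives
`π₁ (1 - p + κ Γc (φ - p)) = (1 - p) κ (Γc (c₂ + π₂) + Γg g)`.
The medium-run terms enter only through `c₂ + π₂ = κ (φ - 1) Γk k / Dq`, which is nonnegative
because public capital raises output (`Γk k ≥ 0`) and the Taylor principle holds (`φ > 1`);
the direct demand effect `Γg g > 0` then makes `π₁` strictly positive.
-/

lemma short_run_inflation_mul_eq {κ Γc Γg φ p g c₂ π₂ c₁ π₁ : ℝ}
    (heuler : c₁ = p * c₁ + (1 - p) * c₂ - (φ * π₁ - p * π₁ - (1 - p) * π₂))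
    (hphillips : π₁ = κ * (Γc * c₁ + Γg * g)) :
    π₁ * (1 - p + κ * Γc * (φ - p)) = (1 - p) * κ * (Γc * (c₂ + π₂) + Γg * g) := by
  linear_combination (1 - p) * hphillips + κ * Γc * heuler

lemma short_run_inflation_pos {κ Γc Γg φ p g c₂ π₂ c₁ π₁ : ℝ}
    (hκ : 0 < κ) (hΓc : 0 ≤ Γc) (hΓg : 0 < Γg) (hg : 0 < g) (hp : p < 1) (hφ : p ≤ φ)
    (hmedium : 0 ≤ c₂ + π₂)
    (heuler : c₁ = p * c₁ + (1 - p) * c₂ - (φ * π₁ - p * π₁ - (1 - p) * π₂))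
    (hphillips : π₁ = κ * (Γc * c₁ + Γg * g)) :
    0 < π₁ := by
  have h1p : 0 < 1 - p := sub_pos.mpr hp
  have hden : 0 < 1 - p + κ * Γc * (φ - p) := by
    have : 0 ≤ κ * Γc * (φ - p) := by have := sub_nonneg.mpr hφ; positivity
    linarith
  have hrhs : 0 < (1 - p) * κ * (Γc * (c₂ + π₂) + Γg * g) := by positivity
  rw [← short_run_inflation_mul_eq heuler hphillips] at hrhs
  exact pos_of_mul_pos_left hrhs hden.le

lemma medium_run_add_eq (κ φ q x D : ℝ) :
    κ * (φ - q) * x / D + -(κ * (1 - q) * x) / D = κ * (φ - 1) * x / D := by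
  ring

lemma medium_run_add_nonneg {κ φ q x D : ℝ} (hκ : 0 ≤ κ) (hφ : 1 ≤ φ) (hx : 0 ≤ x)
    (hD : 0 ≤ D) :
    0 ≤ κ * (φ - q) * x / D + -(κ * (1 - q) * x) / D := by
  have := sub_nonneg.mpr hφ
  rw [medium_run_add_eq]
  positivity

theorem normal_times_inflation_positive_general
    (κ Γc Γg δt εg p q φ g : ℝ)
    (hκ : 0 < κ) (hΓc : 0 < Γc) (hΓg : 0 < Γg) (hδt : 0 < δt) (hεg : 0 ≤ εg)
    (hp1 : p < 1) (hq1 : q < 1) (hφ : 1 < φ)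
    (hg : 0 < g)
    (Γk Dq k c₂ π₂ : ℝ)
    (hΓk : Γk = (1 + Γg) * εg)
    (hDq : Dq = 1 - q + κ * Γc * (φ - q))
    (hk : k = δt * g / (1 - p))
    (hc₂ : c₂ = κ * (φ - q) * Γk * k / Dq)
    (hπ₂ : π₂ = -(κ * (1 - q) * Γk * k) / Dq) :
    ∀ c₁ π₁ : ℝ,
      (c₁ = p * c₁ + (1 - p) * c₂ - (φ * π₁ - p * π₁ - (1 - p) * π₂) ∧
       π₁ = κ * (Γc * c₁ + Γg * g)) →
      0 < π₁ := by
  rintro c₁ π₁ ⟨heuler, hphillips⟩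
  have hk_nonneg : 0 ≤ k := by
    have := sub_pos.mpr hp1
    rw [hk]; positivity
  have hΓk_nonneg : 0 ≤ Γk := by rw [hΓk]; positivity
  have hDq_nonneg : 0 ≤ Dq := by
    have := sub_pos.mpr hq1
    have : 0 < φ - q := by linarith
    rw [hDq]; positivity
  have hmedium : 0 ≤ c₂ + π₂ := by
    rw [hc₂, hπ₂, mul_assoc _ Γk, mul_assoc _ Γk]
    exact medium_run_add_nonneg hκ.le hφ.le (mul_nonneg hΓk_nonneg hk_nonneg) hDq_nonneg
  exact short_run_inflation_pos hκ hΓc.le hΓg hg hp1 (by linarith) hmedium heuler hphillips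

theorem normal_times_inflation_positive
    (κ Γc Γg δt εg p q φ g : ℝ)
    (hκ : 0 < κ) (hΓc : 0 < Γc) (hΓg : 0 < Γg) (hδt : 0 < δt) (hεg : 0 ≤ εg)
    (hp0 : 0 < p) (hp1 : p < 1) (hq0 : 0 < q) (hq1 : q < 1) (hφ : 1 < φ)
    (hg : 0 < g)
    (Γk Dq k c₂ π₂ : ℝ)
    (hΓk : Γk = (1 + Γg) * εg)
    (hDq : Dq = 1 - q + κ * Γc * (φ - q))
    (hk : k = δt * g / (1 - p))
    (hc₂ : c₂ = κ * (φ - q) * Γk * k / Dq)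
    (hπ₂ : π₂ = -(κ * (1 - q) * Γk * k) / Dq) :
    ∀ c₁ π₁ : ℝ,
      (c₁ = p * c₁ + (1 - p) * c₂ - (φ * π₁ - p * π₁ - (1 - p) * π₂) ∧
       π₁ = κ * (Γc * c₁ + Γg * g)) →
      0 < π₁ :=
  normal_times_inflation_positive_general κ Γc Γg δt εg p q φ g hκ hΓc hΓg hδt hεg hp1 hq1 hφ hg Γk
    Dq k c₂ π₂ hΓk hDq hk hc₂ hπ₂
end

section
/- Let κ > 0, Γ_c > 0, Γ_g > 0, δ̃ > 0, 0 < p < 1, 0 < q < 1 < φ_π, 0 < β < 1 be real numbers, and set D_q := 1 − q + κΓ_c(φ_π − q), D_p := 1 − p + κΓ_c(φ_π − p), ε_g^I := ((φ_π − p)/(φ_π − 1))·(Γ_g/(1 + Γ_g))·(D_q/δ̃), and for ε ≥ 0 define the cumulative present-discounted-value multiplier 𝔐(ε) := κ·[ (φ_π − 1)(1 + Γ_g)·δ̃·ε / D_q − (φ_π − p)·Γ_g ] / D_p + (β/(1 − βq)) · (κ(φ_π − q)(1 + Γ_g)/D_q) · δ̃·ε. Define ε_g^M := ε_g^I / (1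 + (β/(1 − βq))·((φ_π − q)/(φ_π − 1))·D_p). Then 0 < ε_g^M < ε_g^I, and for all ε ≥ 0, 𝔐(ε) > 0 if and only if ε > ε_g^M. -/
theorem pdv_multiplier_threshold_normal_times
    (κ Γc Γg δt p q φ β : ℝ)
    (hκ : 0 < κ) (hΓc : 0 < Γc) (hΓg : 0 < Γg) (hδt : 0 < δt)
    (hp0 : 0 < p) (hp1 : p < 1) (hq0 : 0 < q) (hq1 : q < 1) (hφ : 1 < φ)
    (hβ0 : 0 < β) (hβ1 : β < 1)
    (Dq Dp εgI εgM : ℝ) (𝔐 : ℝ → ℝ)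
    (hDq : Dq = 1 - q + κ * Γc * (φ - q))
    (hDp : Dp = 1 - p + κ * Γc * (φ - p))
    (hεgI : εgI = ((φ - p) / (φ - 1)) * (Γg / (1 + Γg)) * (Dq / δt))
    (h𝔐 : ∀ ε : ℝ, 𝔐 ε =
      κ * ((φ - 1) * (1 + Γg) * δt * ε / Dq - (φ - p) * Γg) / Dp +
      (β / (1 - β * q)) * (κ * (φ - q) * (1 + Γg) / Dq) * (δt * ε))
    (hεgM : εgM = εgI / (1 + (β / (1 - β * q)) * ((φ - q) / (φ - 1)) * Dp)) :
    0 < εgM ∧ εgM < εgI ∧ ∀ ε : ℝ, 0 ≤ ε → (0 < 𝔐 ε ↔ εgM < ε) := by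
  have hφp : 0 < φ - p := by linarith
  have hφq : 0 < φ - q := by linarith
  have hφ1 : 0 < φ - 1 := by linarith
  have hDqpos : 0 < Dq := by rw [hDq]; nlinarith [mul_pos (mul_pos hκ hΓc) hφq]
  have hDppos : 0 < Dp := by rw [hDp]; nlinarith [mul_pos (mul_pos hκ hΓc) hφp]
  have hβq : 0 < 1 - β * q := by nlinarith
  have h1Γg : 0 < 1 + Γg := by linarith
  have hεgIpos : 0 < εgI := by
    rw [hεgI]
    positivity
  have hKpos : 0 < (β / (1 - β * q)) * ((φ - q) / (φ - 1)) * Dp := by positivity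
  have hden : (0:ℝ) < 1 + (β / (1 - β * q)) * ((φ - q) / (φ - 1)) * Dp := by linarith
  have hεgMpos : 0 < εgM := by rw [hεgM]; positivity
  have hεgMlt : εgM < εgI := by
    rw [hεgM]
    rw [div_lt_iff₀ hden]
    nlinarith
  -- slope
  set S : ℝ := κ * (φ - 1) * (1 + Γg) * δt / (Dq * Dp) +
      (β / (1 - β * q)) * (κ * (φ - q) * (1 + Γg) / Dq) * δt with hS
  have hSpos : 0 < S := by rw [hS]; positivity
  have hfac : ∀ ε : ℝ, 𝔐 ε = S * (ε - εgM) := by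
    intro ε
    rw [h𝔐, hS, hεgM, hεgI]
    field_simp
    ring
  refine ⟨hεgMpos, hεgMlt, fun ε _ => ?_⟩
  rw [hfac ε]
  constructor
  · intro h
    nlinarith
  · intro h
    have : 0 < ε - εgM := by linarith
    positivity
end

section
/- Let κ > 0, Γ_c > 0, Γ_g > 0, δ̃ > 0, ε_g ≥ 0, 0 < p < 1, Θ ≥ 0, and g be real numbers, and suppose 1 − p(1 + κΓ_c) ≠ 0. Let c₂, π₂ be real numbers whose sum equals Θ·ε_g·δ̃·g/(1 − p). Then the unique pair (c₁, π₁) satisfying the ELB short-run system c₁ = p·c₁ + (1−p)·c₂ + p·π₁ + (1−p)·π₂ and π₁ = κ(Γ_c·c₁ + Γ_g·g) satisfies c₁ = (Θ·δ̃·ε_g + p·κ·Γ_g)·g / (1 − p(1 + κΓ_c)). -/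
theorem elb_short_run_consumption
    (κ Γc Γg δt εg p Θ g : ℝ)
    (hκ : 0 < κ) (hΓc : 0 < Γc) (hΓg : 0 < Γg) (hδt : 0 < δt) (hεg : 0 ≤ εg)
    (hp0 : 0 < p) (hp1 : p < 1) (hΘ : 0 ≤ Θ)
    (hdet : 1 - p * (1 + κ * Γc) ≠ 0)
    (c₂ π₂ : ℝ)
    (hsum : c₂ + π₂ = Θ * εg * δt * g / (1 - p)) :
    ∀ c₁ π₁ : ℝ,
      (c₁ = p * c₁ + (1 - p) * c₂ + p * π₁ + (1 - p) * π₂ ∧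
       π₁ = κ * (Γc * c₁ + Γg * g)) →
      c₁ = (Θ * δt * εg + p * κ * Γg) * g / (1 - p * (1 + κ * Γc)) := by
  rintro c₁ π₁ ⟨h1, h2⟩
  have hp : (1 : ℝ) - p ≠ 0 := by linarith
  rw [eq_div_iff hdet]
  have hs : (c₂ + π₂) * (1 - p) = Θ * εg * δt * g := by
    field_simp at hsum; linarith [hsum]
  linear_combination h1 + p * h2 + hs
end

section
/- Let κ > 0, Γ_c > 0, Γ_g > 0, δ̃ > 0, ε_g ≥ 0, 0 < p < 1, Θ ≥ 0, and g be real numbers, and suppose 1 − p(1 + κΓ_c) ≠ 0. Let c₂, π₂ be real numbers with c₂ + π₂ = Θ·ε_g·δ̃·g/(1 − p). Then the unique pair (c₁, π₁) satisfying the ELB short-run system c₁ = p·c₁ + (1−p)·c₂ + p·π₁ + (1−p)·π₂ and π₁ = κ(Γ_c·c₁ + Γ_g·g) satisfies π₁ = κ·(Γ_c·Θ·δ̃·ε_g + (1 − p)·Γ_g)·g / (1 − p(1 + κΓ_c)). -/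
theorem elb_short_run_inflation
    (κ Γc Γg δt εg p Θ g : ℝ)
    (hκ : 0 < κ) (hΓc : 0 < Γc) (hΓg : 0 < Γg) (hδt : 0 < δt) (hεg : 0 ≤ εg)
    (hp0 : 0 < p) (hp1 : p < 1) (hΘ : 0 ≤ Θ)
    (hdet : 1 - p * (1 + κ * Γc) ≠ 0)
    (c₂ π₂ : ℝ)
    (hsum : c₂ + π₂ = Θ * εg * δt * g / (1 - p)) :
    ∀ c₁ π₁ : ℝ,
      (c₁ = p * c₁ + (1 - p) * c₂ + p * π₁ + (1 - p) * π₂ ∧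
       π₁ = κ * (Γc * c₁ + Γg * g)) →
      π₁ = κ * (Γc * Θ * δt * εg + (1 - p) * Γg) * g / (1 - p * (1 + κ * Γc)) := by
  intro c₁ π₁ ⟨h1, h2⟩
  have hp : (1 : ℝ) - p ≠ 0 := by linarith
  field_simp at hsum ⊢
  linear_combination (1 - p) * h2 + κ * Γc * h1 + κ * Γc * hsum
end

section
/- Let κ > 0, Γ_g > 0, δ̃ > 0, 0 < p < 1, 0 < q < 1 < φ_π, 0 < β < 1 be real numbers, let D := 1 − p(1 + κΓ_c) with Γ_c > 0 and assume D < 0. Let Θ > 0 and Θ_{c,k} > 0 be real numbers with Θ_{c,k}·(φ_π − 1) = Θ·(φ_π − q), and for ε ≥ 0 define 𝔐(ε) := (Θ·δ̃·ε + p·κ·Γ_g)/D + (β/(1 − βq))·Θ_{c,k}·δ̃·ε. Then: (i) if β(φ_π − q)/(1 − βq) > −(φ_π − 1)/D, there exists a threshold ε* ≥ 0 such that 𝔐(ε) > 0 for every ε > ε*; (ii) if β(φ_π − q)/(1 − βq) < −(φ_π − 1)/D, then 𝔐(ε) ≤ p·κ·Γ_g/D < 0 for every ε ≥ 0. -/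
theorem pdv_multiplier_negative_det
    (κ Γc Γg δt p q φ β : ℝ)
    (hκ : 0 < κ) (hΓc : 0 < Γc) (hΓg : 0 < Γg) (hδt : 0 < δt)
    (hp0 : 0 < p) (hp1 : p < 1) (hq0 : 0 < q) (hq1 : q < 1) (hφ : 1 < φ)
    (hβ0 : 0 < β) (hβ1 : β < 1)
    (D Θ Θck : ℝ)
    (hD : D = 1 - p * (1 + κ * Γc)) (hDneg : D < 0)
    (hΘ : 0 < Θ) (hΘck : 0 < Θck)
    (hratio : Θck * (φ - 1) = Θ * (φ - q))
    (𝔐 : ℝ → ℝ)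
    (h𝔐 : ∀ ε : ℝ, 𝔐 ε = (Θ * δt * ε + p * κ * Γg) / D + (β / (1 - β * q)) * Θck * δt * ε) :
    (β * (φ - q) / (1 - β * q) > -((φ - 1) / D) →
      ∃ εs : ℝ, 0 ≤ εs ∧ ∀ ε : ℝ, εs < ε → 0 < 𝔐 ε) ∧
    (β * (φ - q) / (1 - β * q) < -((φ - 1) / D) →
      ∀ ε : ℝ, 0 ≤ ε → 𝔐 ε ≤ p * κ * Γg / D ∧ p * κ * Γg / D < 0) := by
  have hDne : D ≠ 0 := ne_of_lt hDneg
  have ha : 0 < 1 - β * q := by nlinarith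
  have hane : (1 : ℝ) - β * q ≠ 0 := ne_of_gt ha
  have hφ1 : 0 < φ - 1 := by linarith
  have hφq : 0 < φ - q := by linarith
  have hC : p * κ * Γg / D < 0 :=
    div_neg_of_pos_of_neg (by positivity) hDneg
  set S : ℝ := Θ * δt / D + β / (1 - β * q) * Θck * δt with hSdef
  have hM : ∀ ε : ℝ, 𝔐 ε = S * ε + p * κ * Γg / D := by
    intro ε
    rw [h𝔐, hSdef]
    field_simp
    ring
  have hSeq : S = (Θ * δt * (1 - β * q) + β * Θck * δt * D) / (D * (1 - β * q)) := by
    rw [hSdef]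
    field_simp
  clear_value S
  have hden : D * (1 - β * q) < 0 := mul_neg_of_neg_of_pos hDneg ha
  have hNφ : (Θ * δt * (1 - β * q) + β * Θck * δt * D) * (φ - 1)
      = Θ * δt * ((1 - β * q) * (φ - 1) + β * (φ - q) * D) := by
    linear_combination β * δt * D * hratio
  constructor
  · intro h
    have h1 : (φ - 1) * (1 - β * q) < β * (φ - q) * (-D) := by
      have hrw : -((φ - 1) / D) = (φ - 1) / (-D) := by
        rw [div_neg]
      rw [gt_iff_lt, hrw] at h
      exact (div_lt_div_iff₀ (by linarith) ha).mp h
    have hneg : (1 - β * q) * (φ - 1) + β * (φ - q) * D < 0 := by nlinarith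
    have hNum : Θ * δt * (1 - β * q) + β * Θck * δt * D < 0 := by
      nlinarith [mul_pos hΘ hδt, hNφ]
    have hS : 0 < S := by
      rw [hSeq]
      exact div_pos_of_neg_of_neg hNum hden
    refine ⟨(-(p * κ * Γg / D)) / S, le_of_lt (div_pos (by linarith) hS), ?_⟩
    intro ε hε
    rw [hM]
    have h2 : S * ((-(p * κ * Γg / D)) / S) < S * ε := by
      exact mul_lt_mul_of_pos_left hε hS
    rw [mul_div_cancel₀ _ (ne_of_gt hS)] at h2
    linarith
  · intro h
    have h1 : β * (φ - q) * (-D) < (φ - 1) * (1 - β * q) := by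
      have hrw : -((φ - 1) / D) = (φ - 1) / (-D) := by
        rw [div_neg]
      rw [hrw] at h
      exact (div_lt_div_iff₀ ha (by linarith)).mp h
    have hpos : 0 < (1 - β * q) * (φ - 1) + β * (φ - q) * D := by nlinarith
    have hNum : 0 < Θ * δt * (1 - β * q) + β * Θck * δt * D := by
      nlinarith [mul_pos hΘ hδt, hNφ]
    have hS : S < 0 := by
      rw [hSeq]
      exact div_neg_of_pos_of_neg hNum hden
    intro ε hε
    refine ⟨?_, hC⟩
    rw [hM]
    have hSε : S * ε ≤ 0 := mul_nonpos_of_nonpos_of_nonneg (le_of_lt hS) hε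
    linarith
end

section
/- Let κ > 0, Γ_c > 0, Γ_g > 0, δ̃ > 0, 0 < p < 1, Θ^z < 0 be real numbers and assume D := 1 − p(1 + κΓ_c) > 0. For ε ≥ 0 define M_c(ε) := (Θ^z·δ̃·ε + p·κ·Γ_g)/D and M_π(ε) := κ·(Γ_c·Θ^z·δ̃·ε + (1 − p)·Γ_g)/D, and set ε_c^z := p·κ·Γ_g/(−Θ^z·δ̃) and ε_π^z := (1 − p)·Γ_g/(Γ_c·(−Θ^z)·δ̃). Then: (i) M_c(ε) < 0 if and only if ε > ε_c^z; (ii) M_π(ε) < 0 if and only if ε > ε_π^z; and (iii) ε_π^z = ((1 − p)/(p·κ·Γ_c))·ε_c^z. -/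
theorem long_lived_trap_thresholds
    (κ Γc Γg δt p Θz : ℝ)
    (hκ : 0 < κ) (hΓc : 0 < Γc) (hΓg : 0 < Γg) (hδt : 0 < δt)
    (hp0 : 0 < p) (hp1 : p < 1) (hΘz : Θz < 0)
    (D εcz επz : ℝ) (Mc Mπ : ℝ → ℝ)
    (hD : D = 1 - p * (1 + κ * Γc)) (hDpos : 0 < D)
    (hMc : ∀ ε : ℝ, Mc ε = (Θz * δt * ε + p * κ * Γg) / D)
    (hMπ : ∀ ε : ℝ, Mπ ε = κ * (Γc * Θz * δt * ε + (1 - p) * Γg) / D)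
    (hεcz : εcz = p * κ * Γg / (-Θz * δt))
    (hεπz : επz = (1 - p) * Γg / (Γc * (-Θz) * δt)) :
    (∀ ε : ℝ, 0 ≤ ε → (Mc ε < 0 ↔ εcz < ε)) ∧
    (∀ ε : ℝ, 0 ≤ ε → (Mπ ε < 0 ↔ επz < ε)) ∧
    επz = ((1 - p) / (p * κ * Γc)) * εcz := by
  have hΘ : 0 < -Θz := by linarith
  have h1 : 0 < -Θz * δt := mul_pos hΘ hδt
  have h2 : 0 < Γc * -Θz * δt := mul_pos (mul_pos hΓc hΘ) hδt
  refine ⟨fun ε _ => ?_, fun ε _ => ?_, ?_⟩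
  · rw [hMc, div_lt_iff₀ hDpos, hεcz, div_lt_iff₀ h1]
    constructor <;> intro h <;> nlinarith
  · rw [hMπ, div_lt_iff₀ hDpos, hεπz, div_lt_iff₀ h2]
    constructor <;> intro h <;> nlinarith
  · rw [hεcz, hεπz]
    have h3 : Θz ≠ 0 := ne_of_lt hΘz
    field_simp
end

section
/- Let β ∈ (0,1), φ > 1, a > 0 and p ∈ (0,1) be real numbers, let L be a natural number, and let ξ be a real number with p^L·ξ > −log β. Define a finite sequence c(1), …, c(L+1) of real numbers backwards by c(L+1) = log β/(a·φ) and c(ℓ) = (1 + a)·c(ℓ+1) − log β − p^{ℓ−1}·ξ for every ℓ with 1 ≤ ℓ ≤ L. Then a·c(ℓ) ≤ log β/φ for every ℓ with 1 ≤ ℓ ≤ L+1. -/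
theorem elb_binds_throughout_trap
    (β φ a p : ℝ) (hβ0 : 0 < β) (hβ1 : β < 1) (hφ : 1 < φ) (ha : 0 < a)
    (hp0 : 0 < p) (hp1 : p < 1)
    (L : ℕ) (ξ : ℝ) (hξ : p ^ L * ξ > -Real.log β)
    (c : ℕ → ℝ)
    (hterm : c (L + 1) = Real.log β / (a * φ))
    (hrec : ∀ ℓ : ℕ, 1 ≤ ℓ → ℓ ≤ L →
      c ℓ = (1 + a) * c (ℓ + 1) - Real.log β - p ^ (ℓ - 1) * ξ) :
    ∀ ℓ : ℕ, 1 ≤ ℓ → ℓ ≤ L + 1 → a * c ℓ ≤ Real.log β / φ := by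
  have hlb : Real.log β < 0 := Real.log_neg hβ0 hβ1
  have hφ0 : (0:ℝ) < φ := lt_trans one_pos hφ
  have hlbφ : Real.log β / φ < 0 := div_neg_of_neg_of_pos hlb hφ0
  have hξ0 : 0 < ξ := by
    by_contra h
    push_neg at h
    nlinarith [pow_pos hp0 L, mul_nonpos_of_nonneg_of_nonpos (le_of_lt (pow_pos hp0 L)) h]
  -- key backward induction
  have key : ∀ j : ℕ, j ≤ L → a * c (L + 1 - j) ≤ Real.log β / φ := by
    intro j
    induction j with
    | zero =>
      intro _
      simp only [Nat.sub_zero, hterm]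
      rw [show a * (Real.log β / (a * φ)) = Real.log β / φ by field_simp]
    | succ k ih =>
      intro hk
      have hkL : k ≤ L := le_of_lt hk
      have h1 : L + 1 - (k + 1) = L - k := by omega
      have h2 : (L - k) + 1 = L + 1 - k := by omega
      have h3 : 1 ≤ L - k := by omega
      have h4 : L - k ≤ L := by omega
      have hr := hrec (L - k) h3 h4
      rw [h2] at hr
      have ihk := ih hkL
      have hpe : p ^ L * ξ ≤ p ^ (L - k - 1) * ξ := by
        apply mul_le_mul_of_nonneg_right _ (le_of_lt hξ0)
        exact pow_le_pow_of_le_one (le_of_lt hp0) (le_of_lt hp1) (by omega)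
      rw [h1, hr]
      have h5 : (1 + a) * (a * c (L + 1 - k)) ≤ (1 + a) * (Real.log β / φ) := by
        apply mul_le_mul_of_nonneg_left ihk (by linarith)
      nlinarith [hξ, hpe, h5, hlbφ, ha]
  intro ℓ h1 h2
  have := key (L + 1 - ℓ) (by omega)
  have h3 : L + 1 - (L + 1 - ℓ) = ℓ := by omega
  rwa [h3] at this
end
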